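/- If T ≤_HP T' are rooted phylogenetic trees on X, then the distance in the Hasse diagram of ≤_HP satisfies d_HP(T, T') = f(T') − f(T), where f is the rank function f(T) = Σ_{A ∈ P(T)} (|A| − 1) over proper clusters. -/
import Mathlib


open Finset

variable {X : Type*} [DecidableEq X] [Fintype X]

/-- A hierarchy on a finite set `X`: a collection of subsets of `X` containing `X`
and all singletons, whose members are nonempty and pairwise disjoint or nested. -/
def IsHierarchy (H : Finset (Finset X)) : Prop :=
  (Finset.univ ∈ H) ∧ (∀ x : X, {x} ∈ H) ∧ (∀ A ∈ H, A.Nonempty) ∧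
    ∀ A ∈ H, ∀ B ∈ H, A ∩ B = ∅ ∨ A ⊆ B ∨ B ⊆ A

/-- A hierarchy-preserving map from `H` to `H'`: fixes singletons, is enveloping and
subset-preserving. -/
def IsHPMap (H H' : Finset (Finset X)) (δ : Finset X → Finset X) : Prop :=
  (∀ A ∈ H, δ A ∈ H') ∧ (∀ x : X, δ {x} = {x}) ∧
    (∀ A ∈ H, A ⊆ δ A) ∧ ∀ A ∈ H, ∀ B ∈ H, A ⊂ B → δ A ⊂ δ B

/-- `T ≤_HP T'`: there exists a hierarchy-preserving map from `H(T)` to `H(T')`. -/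
def LeHP (H H' : Finset (Finset X)) : Prop :=
  ∃ δ : Finset X → Finset X, IsHPMap H H' δ

/-- `A` is an inclusion-maximal (proper) subcluster of `D` in `H`. -/
def IsMaxSub (H : Finset (Finset X)) (A D : Finset X) : Prop :=
  A ∈ H ∧ D ∈ H ∧ A ⊂ D ∧ ∀ C ∈ H, ¬(A ⊂ C ∧ C ⊂ D)

/-- The binding of `H` at `A ∪ B`: delete the non-singleton members of `{A, B}` and
add `A ∪ B`. -/
def binding (H : Finset (Finset X)) (A B : Finset X) : Finset (Finset X) :=
  (H.filter fun C => ¬((C = A ∨ C = B) ∧ 1 < C.card)) ∪ {A ∪ B}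

/-- The proper clusters of a hierarchy: members that are neither `X` nor singletons. -/
def properClusters (H : Finset (Finset X)) : Finset (Finset X) :=
  H.filter fun A => A ≠ Finset.univ ∧ 1 < A.card

/-- The rank of a tree/hierarchy: `f(T) = ∑_{A ∈ P(T)} (|A| - 1)`. -/
def rankHP (H : Finset (Finset X)) : ℕ :=
  ∑ A ∈ properClusters H, (A.card - 1)

/-- `T'` covers `T` in the partial order `≤_HP`. -/
def CoversHP (H H' : Finset (Finset X)) : Prop :=
  LeHP H H' ∧ H ≠ H' ∧
    ∀ H'' : Finset (Finset X), IsHierarchy H'' → LeHP H H'' → LeHP H'' H' → H'' = H ∨ H'' = H'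

/-- Adjacency in the Hasse diagram of `≤_HP` on hierarchies. -/
def HasseAdj (H H' : Finset (Finset X)) : Prop :=
  IsHierarchy H ∧ IsHierarchy H' ∧ (CoversHP H H' ∨ CoversHP H' H)

/-- There is a walk of length `n` between `H` and `H'` in the Hasse diagram. -/
def HasPathHP (H H' : Finset (Finset X)) (n : ℕ) : Prop :=
  ∃ c : ℕ → Finset (Finset X), c 0 = H ∧ c n = H' ∧ ∀ i < n, HasseAdj (c i) (c (i + 1))

/-- `d` is the geodesic distance between `H` and `H'` in the Hasse diagram of `≤_HP`. -/
def DistHP (H H' : Finset (Finset X)) (d : ℕ) : Prop :=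
  HasPathHP H H' d ∧ ∀ m : ℕ, HasPathHP H H' m → d ≤ m

/-! ### Auxiliary lemmas -/

section Aux

private lemma sSub {A B : Finset X} (h : A ⊂ B) : A ⊆ B := (Finset.ssubset_def.1 h).1

private lemma sNe {A B : Finset X} (h : A ⊂ B) : A ≠ B := by
  intro he; subst he; exact (Finset.ssubset_def.1 h).2 subset_rfl

private lemma mkS {A B : Finset X} (h1 : A ⊆ B) (h2 : A ≠ B) : A ⊂ B :=
  Finset.ssubset_iff_subset_ne.2 ⟨h1, h2⟩

private lemma sTrans1 {A B C : Finset X} (h : A ⊂ B) (h' : B ⊆ C) : A ⊂ C :=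
  Finset.ssubset_def.2 ⟨(sSub h).trans h', fun hca => (Finset.ssubset_def.1 h).2 (h'.trans hca)⟩

private lemma sTrans2 {A B C : Finset X} (h : A ⊆ B) (h' : B ⊂ C) : A ⊂ C :=
  Finset.ssubset_def.2 ⟨h.trans (sSub h'), fun hca => (Finset.ssubset_def.1 h').2 (hca.trans h)⟩

lemma leHP_refl (H : Finset (Finset X)) : LeHP H H :=
  ⟨id, fun _ hA => hA, fun _ => rfl, fun _ _ => subset_rfl, fun _ _ _ _ h => h⟩

lemma hier_lam {H : Finset (Finset X)} (hH : IsHierarchy H) {A B : Finset X}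
    (hA : A ∈ H) (hB : B ∈ H) : A ∩ B = ∅ ∨ A ⊆ B ∨ B ⊆ A := hH.2.2.2 A hA B hB

lemma hier_nested {H : Finset (Finset X)} (hH : IsHierarchy H) {A B : Finset X}
    (hA : A ∈ H) (hB : B ∈ H) {x : X} (hxA : x ∈ A) (hxB : x ∈ B) : A ⊆ B ∨ B ⊆ A := by
  rcases hH.2.2.2 A hA B hB with h | h
  · exact absurd (h ▸ Finset.mem_inter.2 ⟨hxA, hxB⟩) (Finset.notMem_empty x)
  · exact h

lemma exists_parent {H : Finset (Finset X)} (hH : IsHierarchy H) {A : Finset X}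
    (hA : A ∈ H) (hAu : A ≠ Finset.univ) : ∃ D, IsMaxSub H A D := by
  classical
  have hS : (H.filter fun D => A ⊂ D).Nonempty :=
    ⟨Finset.univ, Finset.mem_filter.2 ⟨hH.1, mkS (Finset.subset_univ A) hAu⟩⟩
  obtain ⟨D, hD, hmin⟩ := Finset.exists_min_image _ Finset.card hS
  rw [Finset.mem_filter] at hD
  refine ⟨D, hA, hD.1, hD.2, ?_⟩
  rintro C hC ⟨h1, h2⟩
  have h3 := hmin C (Finset.mem_filter.2 ⟨hC, h1⟩)
  have h4 := Finset.card_lt_card h2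
  omega

lemma exists_child {H : Finset (Finset X)} (hH : IsHierarchy H) {D : Finset X}
    (hD : D ∈ H) (hcard : 1 < D.card) {x : X} (hx : x ∈ D) :
    ∃ A, IsMaxSub H A D ∧ x ∈ A := by
  classical
  have hS : (H.filter fun A => x ∈ A ∧ A ⊂ D).Nonempty := by
    refine ⟨{x}, Finset.mem_filter.2 ⟨hH.2.1 x, Finset.mem_singleton_self x, ?_⟩⟩
    refine mkS (Finset.singleton_subset_iff.2 hx) ?_
    intro h; rw [← h] at hcard; simp at hcard
  obtain ⟨A, hA, hmax⟩ := Finset.exists_max_image _ Finset.card hS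
  rw [Finset.mem_filter] at hA
  refine ⟨A, ⟨hA.1, hD, hA.2.2, ?_⟩, hA.2.1⟩
  rintro C hC ⟨h1, h2⟩
  have h3 := hmax C (Finset.mem_filter.2 ⟨hC, (sSub h1) hA.2.1, h2⟩)
  have h4 := Finset.card_lt_card h1
  omega

lemma maxsub_disjoint {H : Finset (Finset X)} (hH : IsHierarchy H) {A B D : Finset X}
    (hA : IsMaxSub H A D) (hB : IsMaxSub H B D) (hne : A ≠ B) : A ∩ B = ∅ := by
  rcases hier_lam hH hA.1 hB.1 with h | h | h
  · exact h
  · exact absurd ⟨mkS h hne, hB.2.2.1⟩ (hA.2.2.2 B hB.1)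
  · exact absurd ⟨mkS h hne.symm, hA.2.2.1⟩ (hB.2.2.2 A hA.1)

/-- If `A` is a maximal subcluster of `D` and `C ∈ H` strictly contains `A`,
then `C` contains `D`. -/
lemma maxsub_jump {H : Finset (Finset X)} (hH : IsHierarchy H) {A D C : Finset X}
    (hA : IsMaxSub H A D) (hC : C ∈ H) (hAC : A ⊂ C) : D ⊆ C := by
  obtain ⟨a, ha⟩ := hH.2.2.1 A hA.1
  rcases hier_nested hH hC hA.2.1 (x := a) ((sSub hAC) ha) ((sSub hA.2.2.1) ha) with h | h
  · rcases eq_or_ne C D with rfl | hne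
    · exact subset_rfl
    · exact absurd ⟨hAC, mkS h hne⟩ (hA.2.2.2 C hC)
  · exact h

/-- A good configuration for a single binding step: siblings `A ≠ B` below `D` in `H`,
with `A ∪ B ≠ D`, and a cluster `E` of `H'` with `δ A ∪ δ B ⊆ E ⊊ δ D`. -/
def GoodStep (H H' : Finset (Finset X)) (δ : Finset X → Finset X) : Prop :=
  ∃ D A B E : Finset X, IsMaxSub H A D ∧ IsMaxSub H B D ∧ A ≠ B ∧ A ∪ B ≠ D ∧
    E ∈ H' ∧ δ A ⊆ E ∧ δ B ⊆ E ∧ E ⊂ δ D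

lemma eq_of_no_goodStep {H H' : Finset (Finset X)} (hH : IsHierarchy H) (hH' : IsHierarchy H')
    {δ : Finset X → Finset X} (hδ : IsHPMap H H' δ) (hng : ¬ GoodStep H H' δ) : H = H' := by
  classical
  obtain ⟨hmap, hsing, henv, hmono⟩ := hδ
  have huniv : δ Finset.univ = Finset.univ := Finset.univ_subset_iff.1 (henv _ hH.1)
  -- every cluster of `H` is fixed by `δ`
  have key : ∀ m : ℕ, ∀ A ∈ H, Fintype.card X - A.card ≤ m → δ A = A := by
    intro m
    induction m with
    | zero =>
      intro A hA hm
      have hle := Finset.card_le_univ A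
      have hAcard : A.card = Fintype.card X := by omega
      rw [Finset.eq_univ_of_card A hAcard]; exact huniv
    | succ m ih =>
      intro A hA hm
      rcases eq_or_ne A Finset.univ with rfl | hAu
      · exact huniv
      obtain ⟨D, hAD⟩ := exists_parent hH hA hAu
      have hDfix : δ D = D := by
        apply ih D hAD.2.1
        have h1 : A.card < D.card := Finset.card_lt_card hAD.2.2.1
        have h2 := Finset.card_le_univ D
        omega
      by_contra hne
      have hAδ : A ⊂ δ A := mkS (henv A hA) (fun h => hne h.symm)
      have hδAD : δ A ⊂ D := by
        have h := hmono A hA D hAD.2.1 hAD.2.2.1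
        rwa [hDfix] at h
      obtain ⟨x, hxδA, hxA⟩ := Finset.exists_of_ssubset hAδ
      have hxD : x ∈ D := (sSub hδAD) hxδA
      have hDcard : 1 < D.card := by
        obtain ⟨a, ha⟩ := hH.2.2.1 A hA
        have h1 : A.card < D.card := Finset.card_lt_card hAD.2.2.1
        have h2 : 1 ≤ A.card := Finset.card_pos.2 ⟨a, ha⟩
        omega
      obtain ⟨B, hBD, hxB⟩ := exists_child hH hAD.2.1 hDcard hxD
      have hABne : A ≠ B := fun h => hxA (h ▸ hxB)
      have hxδB : x ∈ δ B := (henv B hBD.1) hxB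
      have hδBD : δ B ⊂ D := by
        have h := hmono B hBD.1 D hAD.2.1 hBD.2.2.1
        rwa [hDfix] at h
      apply hng
      rcases hier_nested hH' (hmap A hA) (hmap B hBD.1) hxδA hxδB with h | h
      · refine ⟨D, A, B, δ B, hAD, hBD, hABne, ?_, hmap B hBD.1, h, subset_rfl,
          by rwa [hDfix]⟩
        intro hUD
        have hsub : D ⊆ δ B := by
          rw [← hUD]; exact Finset.union_subset ((henv A hA).trans h) (henv B hBD.1)
        exact (Finset.ssubset_def.1 hδBD).2 hsub
      · refine ⟨D, A, B, δ A, hAD, hBD, hABne, ?_, hmap A hA, subset_rfl, h,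
          by rwa [hDfix]⟩
        intro hUD
        have hsub : D ⊆ δ A := by
          rw [← hUD]; exact Finset.union_subset (henv A hA) ((henv B hBD.1).trans h)
        exact (Finset.ssubset_def.1 hδAD).2 hsub
  have hfix : ∀ A ∈ H, δ A = A := fun A hA => key (Fintype.card X) A hA (by omega)
  apply Finset.Subset.antisymm
  · intro A hA
    rw [← hfix A hA]; exact hmap A hA
  · intro E hE
    have hS : (H.filter fun D => E ⊆ D).Nonempty :=
      ⟨Finset.univ, Finset.mem_filter.2 ⟨hH.1, Finset.subset_univ E⟩⟩
    obtain ⟨D, hD, hmin⟩ := Finset.exists_min_image _ Finset.card hS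
    rw [Finset.mem_filter] at hD
    rcases eq_or_ne E D with rfl | hEDne
    · exact hD.1
    have hED : E ⊂ D := mkS hD.2 hEDne
    obtain ⟨x, hxE⟩ := hH'.2.2.1 E hE
    have hDcard : 1 < D.card := by
      have h1 : E.card < D.card := Finset.card_lt_card hED
      have h2 : 1 ≤ E.card := Finset.card_pos.2 ⟨x, hxE⟩
      omega
    obtain ⟨A, hAD, hxA⟩ := exists_child hH hD.1 hDcard ((sSub hED) hxE)
    by_cases hEA : E ⊆ A
    · have h3 := hmin A (Finset.mem_filter.2 ⟨hAD.1, hEA⟩)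
      have h4 := Finset.card_lt_card hAD.2.2.1
      omega
    obtain ⟨y, hyE, hyA⟩ := Finset.not_subset.1 hEA
    obtain ⟨B, hBD, hyB⟩ := exists_child hH hD.1 hDcard ((sSub hED) hyE)
    have hABne : A ≠ B := fun h => hyA (h ▸ hyB)
    have hAH' : A ∈ H' := by rw [← hfix A hAD.1]; exact hmap A hAD.1
    have hBH' : B ∈ H' := by rw [← hfix B hBD.1]; exact hmap B hBD.1
    have hAE : A ⊆ E := by
      rcases hier_nested hH' hAH' hE hxA hxE with h | h
      · exact h
      · exact absurd h hEA
    have hBE : B ⊆ E := by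
      rcases hier_nested hH' hBH' hE hyB hyE with h | h
      · exact h
      · exfalso
        have hxB : x ∈ B := h hxE
        have hdisj := maxsub_disjoint hH hAD hBD hABne
        have hmem : x ∈ A ∩ B := Finset.mem_inter.2 ⟨hxA, hxB⟩
        rw [hdisj] at hmem
        exact Finset.notMem_empty x hmem
    exfalso
    apply hng
    refine ⟨D, A, B, E, hAD, hBD, hABne, ?_, hE,
      by rw [hfix A hAD.1]; exact hAE, by rw [hfix B hBD.1]; exact hBE,
      by rw [hfix D hD.1]; exact hED⟩
    intro hUD
    exact (Finset.ssubset_def.1 hED).2 (by rw [← hUD]; exact Finset.union_subset hAE hBE)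

/-- The single binding step lemma. -/
lemma exists_step {H H' : Finset (Finset X)} (hH : IsHierarchy H) (hH' : IsHierarchy H')
    (hle : LeHP H H') (hne : H ≠ H') :
    ∃ K, IsHierarchy K ∧ LeHP H K ∧ LeHP K H' ∧ rankHP K = rankHP H + 1 := by
  classical
  obtain ⟨δ, hδ⟩ := hle
  by_cases hg : GoodStep H H' δ
  swap
  · exact absurd (eq_of_no_goodStep hH hH' hδ hg) hne
  obtain ⟨D, A, B, E, hAD, hBD, hABne, hUD, hE, hδAE, hδBE, hED⟩ := hg
  obtain ⟨hmap, hsing, henv, hmono⟩ := hδ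
  have hA : A ∈ H := hAD.1
  have hB : B ∈ H := hBD.1
  have hD : D ∈ H := hAD.2.1
  have hdisj : A ∩ B = ∅ := maxsub_disjoint hH hAD hBD hABne
  have hAne : A.Nonempty := hH.2.2.1 A hA
  have hBne : B.Nonempty := hH.2.2.1 B hB
  have hUsubD : A ∪ B ⊂ D :=
    mkS (Finset.union_subset (sSub hAD.2.2.1) (sSub hBD.2.2.1)) hUD
  have hUcard : (A ∪ B).card = A.card + B.card :=
    Finset.card_union_of_disjoint (Finset.disjoint_iff_inter_eq_empty.2 hdisj)
  have hAcard : 1 ≤ A.card := Finset.card_pos.2 hAne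
  have hBcard : 1 ≤ B.card := Finset.card_pos.2 hBne
  have hUcard2 : 1 < (A ∪ B).card := by omega
  have hAU : A ⊂ A ∪ B := by
    refine mkS Finset.subset_union_left ?_
    intro h
    obtain ⟨b, hb⟩ := hBne
    have hbA : b ∈ A := by rw [h]; exact Finset.mem_union_right _ hb
    have hmem : b ∈ A ∩ B := Finset.mem_inter.2 ⟨hbA, hb⟩
    rw [hdisj] at hmem; exact Finset.notMem_empty b hmem
  have hBU : B ⊂ A ∪ B := by
    refine mkS Finset.subset_union_right ?_
    intro h
    obtain ⟨a, ha⟩ := hAne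
    have haB : a ∈ B := by rw [h]; exact Finset.mem_union_left _ ha
    have hmem : a ∈ A ∩ B := Finset.mem_inter.2 ⟨ha, haB⟩
    rw [hdisj] at hmem; exact Finset.notMem_empty a hmem
  have hUnotH : A ∪ B ∉ H := fun h => hAD.2.2.2 _ h ⟨hAU, hUsubD⟩
  have hUE : A ∪ B ⊆ E :=
    Finset.union_subset ((henv A hA).trans hδAE) ((henv B hB).trans hδBE)
  have hAneU : A ≠ Finset.univ := by
    intro h; rw [h] at hAD
    exact (Finset.ssubset_def.1 hAD.2.2.1).2 (Finset.subset_univ D)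
  have hBneU : B ≠ Finset.univ := by
    intro h; rw [h] at hBD
    exact (Finset.ssubset_def.1 hBD.2.2.1).2 (Finset.subset_univ D)
  have hUneU : A ∪ B ≠ Finset.univ := by
    intro h; rw [h] at hUsubD
    exact (Finset.ssubset_def.1 hUsubD).2 (Finset.subset_univ D)
  have hmemK : ∀ C : Finset X,
      C ∈ binding H A B ↔ (C ∈ H ∧ ¬((C = A ∨ C = B) ∧ 1 < C.card)) ∨ C = A ∪ B := by
    intro C
    unfold binding
    rw [Finset.mem_union, Finset.mem_filter, Finset.mem_singleton]
  have hjumpA : ∀ C ∈ H, A ⊆ C → C ≠ A → D ⊆ C := fun C hC hs hn =>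
    maxsub_jump hH hAD hC (mkS hs (Ne.symm hn))
  have hjumpB : ∀ C ∈ H, B ⊆ C → C ≠ B → D ⊆ C := fun C hC hs hn =>
    maxsub_jump hH hBD hC (mkS hs (Ne.symm hn))
  -- subclusters of A ∪ B lie in A or in B
  have hsubU : ∀ C ∈ H, C ⊆ A ∪ B → C ⊆ A ∨ C ⊆ B := by
    intro C hC hCU
    rcases hier_lam hH hC hA with h | h | h
    · rcases hier_lam hH hC hB with h' | h' | h'
      · exfalso
        obtain ⟨c, hc⟩ := hH.2.2.1 C hC
        rcases Finset.mem_union.1 (hCU hc) with hc' | hc'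
        · have : c ∈ C ∩ A := Finset.mem_inter.2 ⟨hc, hc'⟩
          rw [h] at this; exact Finset.notMem_empty c this
        · have : c ∈ C ∩ B := Finset.mem_inter.2 ⟨hc, hc'⟩
          rw [h'] at this; exact Finset.notMem_empty c this
      · exact Or.inr h'
      · rcases eq_or_ne C B with rfl | hne'
        · exact Or.inr subset_rfl
        · exact absurd ⟨mkS h' (Ne.symm hne'), sTrans2 hCU hUsubD⟩ (hBD.2.2.2 C hC)
    · exact Or.inl h
    · rcases eq_or_ne C A with rfl | hne'
      · exact Or.inl subset_rfl
      · exact absurd ⟨mkS h (Ne.symm hne'), sTrans2 hCU hUsubD⟩ (hAD.2.2.2 C hC)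
  -- laminarity against the new cluster
  have hKlam : ∀ C ∈ H, C ∩ (A ∪ B) = ∅ ∨ C ⊆ A ∪ B ∨ A ∪ B ⊆ C := by
    intro C hC
    rcases hier_lam hH hC hA with hcA | hcA | hcA
    · rcases hier_lam hH hC hB with hcB | hcB | hcB
      · left
        rw [Finset.inter_union_distrib_left, hcA, hcB, Finset.union_empty]
      · right; left; exact hcB.trans Finset.subset_union_right
      · rcases eq_or_ne C B with rfl | hne'
        · right; left; exact Finset.subset_union_right
        · right; right
          exact (sSub hUsubD).trans (hjumpB C hC hcB hne')
    · right; left; exact hcA.trans Finset.subset_union_left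
    · rcases eq_or_ne C A with rfl | hne'
      · right; left; exact Finset.subset_union_left
      · right; right
        exact (sSub hUsubD).trans (hjumpA C hC hcA hne')
  -- the binding is a hierarchy
  have hKhier : IsHierarchy (binding H A B) := by
    refine ⟨?_, ?_, ?_, ?_⟩
    · rw [hmemK]
      left
      refine ⟨hH.1, ?_⟩
      rintro ⟨h | h, -⟩
      · exact hAneU h.symm
      · exact hBneU h.symm
    · intro x
      rw [hmemK]
      left
      refine ⟨hH.2.1 x, ?_⟩
      rintro ⟨-, h⟩
      simp at h
    · intro C hC
      rw [hmemK] at hC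
      rcases hC with ⟨hC, -⟩ | rfl
      · exact hH.2.2.1 C hC
      · exact hAne.mono Finset.subset_union_left
    · intro C hC C' hC'
      rw [hmemK] at hC hC'
      rcases hC with ⟨hC, -⟩ | rfl <;> rcases hC' with ⟨hC', -⟩ | rfl
      · exact hH.2.2.2 C hC C' hC'
      · exact hKlam C hC
      · rcases hKlam C' hC' with h | h | h
        · left; rw [Finset.inter_comm]; exact h
        · right; right; exact h
        · right; left; exact h
      · right; left; exact subset_rfl
  -- disjointness/strictness helpers among A, B
  have hnotAB : ¬ A ⊂ B := by
    intro h
    obtain ⟨a, ha⟩ := hAne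
    have hmem : a ∈ A ∩ B := Finset.mem_inter.2 ⟨ha, (sSub h) ha⟩
    rw [hdisj] at hmem; exact Finset.notMem_empty a hmem
  have hnotBA : ¬ B ⊂ A := by
    intro h
    obtain ⟨b, hb⟩ := hBne
    have hmem : b ∈ A ∩ B := Finset.mem_inter.2 ⟨(sSub h) hb, hb⟩
    rw [hdisj] at hmem; exact Finset.notMem_empty b hmem
  -- `H ≤ binding H A B`
  have hle1 : LeHP H (binding H A B) := by
    refine ⟨fun C => if (C = A ∨ C = B) ∧ 1 < C.card then A ∪ B else C, ?_, ?_, ?_, ?_⟩ <;>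
      dsimp only
    · intro C hC
      by_cases h : (C = A ∨ C = B) ∧ 1 < C.card
      · rw [if_pos h, hmemK]; right; rfl
      · rw [if_neg h, hmemK]; left; exact ⟨hC, h⟩
    · intro x
      rw [if_neg]
      rintro ⟨-, h⟩
      simp at h
    · intro C hC
      by_cases h : (C = A ∨ C = B) ∧ 1 < C.card
      · rw [if_pos h]
        rcases h.1 with rfl | rfl
        · exact Finset.subset_union_left
        · exact Finset.subset_union_right
      · rw [if_neg h]
    · intro C hC C' hC' hCC'
      by_cases h' : (C' = A ∨ C' = B) ∧ 1 < C'.card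
      · rw [if_pos h']
        have hc : ¬((C = A ∨ C = B) ∧ 1 < C.card) := by
          rintro ⟨hc1, -⟩
          rcases hc1 with rfl | rfl <;> rcases h'.1 with rfl | rfl
          · exact sNe hCC' rfl
          · exact hnotAB hCC'
          · exact hnotBA hCC'
          · exact sNe hCC' rfl
        rw [if_neg hc]
        rcases h'.1 with rfl | rfl
        · exact sTrans1 hCC' Finset.subset_union_left
        · exact sTrans1 hCC' Finset.subset_union_right
      · rw [if_neg h']
        by_cases h : (C = A ∨ C = B) ∧ 1 < C.card
        · rw [if_pos h]
          have hDC' : D ⊆ C' := by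
            rcases h.1 with rfl | rfl
            · exact hjumpA C' hC' (sSub hCC') (Ne.symm (sNe hCC'))
            · exact hjumpB C' hC' (sSub hCC') (Ne.symm (sNe hCC'))
          exact sTrans1 hUsubD hDC'
        · rw [if_neg h]; exact hCC'
  -- `binding H A B ≤ H'`
  have hle2 : LeHP (binding H A B) H' := by
    refine ⟨fun C => if C = A ∪ B then E else δ C, ?_, ?_, ?_, ?_⟩ <;> dsimp only
    · intro C hC
      by_cases h : C = A ∪ B
      · rw [if_pos h]; exact hE
      · rw [if_neg h]
        rw [hmemK] at hC
        rcases hC with ⟨hC, -⟩ | h1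
        · exact hmap C hC
        · exact absurd h1 h
    · intro x
      rw [if_neg, hsing]
      intro h
      have := hUcard2
      rw [← h] at this
      simp at this
    · intro C hC
      by_cases h : C = A ∪ B
      · rw [if_pos h, h]; exact hUE
      · rw [if_neg h]
        rw [hmemK] at hC
        rcases hC with ⟨hC, -⟩ | h1
        · exact henv C hC
        · exact absurd h1 h
    · intro C hC C' hC' hss
      rw [hmemK] at hC hC'
      by_cases h' : C' = A ∪ B
      · rw [if_pos h']
        have hCneU : C ≠ A ∪ B := by rw [← h']; exact sNe hss
        rw [if_neg hCneU]
        have hCH : C ∈ H := by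
          rcases hC with ⟨h1, -⟩ | h1
          · exact h1
          · exact absurd h1 hCneU
        have hCkeep : ¬((C = A ∨ C = B) ∧ 1 < C.card) := by
          rcases hC with ⟨-, h2⟩ | h1
          · exact h2
          · exact absurd h1 hCneU
        have hCU : C ⊆ A ∪ B := by rw [← h']; exact sSub hss
        rcases hsubU C hCH hCU with hca | hcb
        · rcases eq_or_ne C A with rfl | hne'
          · -- C = A is kept, so it is a singleton
            have hC1 : C.card = 1 := by
              by_contra hcc
              have h1 : 1 ≤ C.card := Finset.card_pos.2 hAne
              exact hCkeep ⟨Or.inl rfl, by omega⟩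
            obtain ⟨a, ha⟩ := Finset.card_eq_one.1 hC1
            rw [ha, hsing a, ← ha]
            refine mkS (hCU.trans hUE) ?_
            intro hEq
            obtain ⟨b, hb⟩ := hBne
            have hbE : b ∈ E := ((henv B hB).trans hδBE) hb
            rw [← hEq] at hbE
            have hmem : b ∈ C ∩ B := Finset.mem_inter.2 ⟨hbE, hb⟩
            rw [hdisj] at hmem
            exact Finset.notMem_empty b hmem
          · exact sTrans1 (hmono C hCH A hA (mkS hca hne')) hδAE
        · rcases eq_or_ne C B with rfl | hne'
          · have hC1 : C.card = 1 := by
              by_contra hcc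
              have h1 : 1 ≤ C.card := Finset.card_pos.2 hBne
              exact hCkeep ⟨Or.inr rfl, by omega⟩
            obtain ⟨a, ha⟩ := Finset.card_eq_one.1 hC1
            rw [ha, hsing a, ← ha]
            refine mkS (hCU.trans hUE) ?_
            intro hEq
            obtain ⟨b, hb⟩ := hAne
            have hbE : b ∈ E := ((henv A hA).trans hδAE) hb
            rw [← hEq] at hbE
            have hmem : b ∈ A ∩ C := Finset.mem_inter.2 ⟨hb, hbE⟩
            rw [hdisj] at hmem
            exact Finset.notMem_empty b hmem
          · exact sTrans1 (hmono C hCH B hB (mkS hcb hne')) hδBE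
      · rw [if_neg h']
        have hC'H : C' ∈ H := by
          rcases hC' with ⟨h1, -⟩ | h1
          · exact h1
          · exact absurd h1 h'
        by_cases h : C = A ∪ B
        · rw [if_pos h]
          subst h
          have hAC' : A ⊆ C' := Finset.subset_union_left.trans (sSub hss)
          have hC'neA : C' ≠ A := by
            intro h
            rw [h] at hss
            exact hnotBA (sTrans2 (Finset.subset_union_right : B ⊆ A ∪ B) hss)
          have hDC' : D ⊆ C' := hjumpA C' hC'H hAC' hC'neA
          have hδDC' : δ D ⊆ δ C' := by
            rcases eq_or_ne D C' with rfl | hne'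
            · exact subset_rfl
            · exact sSub (hmono D hD C' hC'H (mkS hDC' hne'))
          exact sTrans1 hED hδDC'
        · rw [if_neg h]
          have hCH : C ∈ H := by
            rcases hC with ⟨h1, -⟩ | h1
            · exact h1
            · exact absurd h1 h
          exact hmono C hCH C' hC'H hss
  -- the rank goes up by one
  have hrank : rankHP (binding H A B) = rankHP H + 1 := by
    have hPK : properClusters (binding H A B) =
        ((properClusters H).filter fun C => ¬(C = A ∨ C = B)) ∪ {A ∪ B} := by
      ext C
      rw [Finset.mem_union, Finset.mem_singleton, properClusters, Finset.mem_filter,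
        Finset.mem_filter, properClusters, Finset.mem_filter, hmemK]
      constructor
      · rintro ⟨⟨hC, hkeep⟩ | rfl, hprop⟩
        · left
          refine ⟨⟨hC, hprop⟩, ?_⟩
          intro hc
          exact hkeep ⟨hc, hprop.2⟩
        · right; rfl
      · rintro (⟨⟨h1, h2⟩, h3⟩ | rfl)
        · exact ⟨Or.inl ⟨h1, fun hh => h3 hh.1⟩, h2⟩
        · exact ⟨Or.inr rfl, hUneU, hUcard2⟩
    have hdisjU : Disjoint ((properClusters H).filter fun C => ¬(C = A ∨ C = B))
        ({A ∪ B} : Finset (Finset X)) := by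
      rw [Finset.disjoint_singleton_right]
      intro hmem
      exact hUnotH (Finset.mem_filter.1 (Finset.mem_filter.1 hmem).1).1
    have hsplit := Finset.sum_filter_add_sum_filter_not (properClusters H)
      (fun C => C = A ∨ C = B) (fun C => C.card - 1)
    have hposs : ((properClusters H).filter fun C => C = A ∨ C = B) ⊆ {A, B} := by
      intro C hC
      rcases (Finset.mem_filter.1 hC).2 with rfl | rfl
      · exact Finset.mem_insert_self _ _
      · exact Finset.mem_insert_of_mem (Finset.mem_singleton_self _)
    have hval : ∑ C ∈ (properClusters H).filter (fun C => C = A ∨ C = B), (C.card - 1)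
        = (A.card - 1) + (B.card - 1) := by
      rw [Finset.sum_subset hposs ?_, Finset.sum_pair hABne]
      intro C hC hnC
      rcases Finset.mem_insert.1 hC with rfl | hC2
      · have hcle : C.card ≤ 1 := by
          by_contra hcc
          exact hnC (Finset.mem_filter.2 ⟨Finset.mem_filter.2 ⟨hA, hAneU, by omega⟩,
            Or.inl rfl⟩)
        omega
      · rw [Finset.mem_singleton] at hC2
        subst hC2
        have hcle : C.card ≤ 1 := by
          by_contra hcc
          exact hnC (Finset.mem_filter.2 ⟨Finset.mem_filter.2 ⟨hB, hBneU, by omega⟩,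
            Or.inr rfl⟩)
        omega
    have hcalc : rankHP (binding H A B) =
        (∑ C ∈ (properClusters H).filter (fun C => ¬(C = A ∨ C = B)), (C.card - 1))
          + ((A ∪ B).card - 1) := by
      rw [rankHP, hPK, Finset.sum_union hdisjU, Finset.sum_singleton]
    rw [hcalc, hUcard, rankHP]
    omega
  exact ⟨binding H A B, hKhier, hle1, hle2, hrank⟩

/-- A crude global bound on the rank. -/
lemma rankHP_le (H : Finset (Finset X)) :
    rankHP H ≤ 2 ^ Fintype.card X * Fintype.card X := by
  have h1 : rankHP H ≤ (properClusters H).card * Fintype.card X := by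
    rw [rankHP]
    have := Finset.sum_le_card_nsmul (properClusters H) (fun C => C.card - 1)
      (Fintype.card X) ?_
    · rwa [smul_eq_mul] at this
    · intro x _
      have := Finset.card_le_univ x
      omega
  have h2 : (properClusters H).card ≤ 2 ^ Fintype.card X := by
    have := Finset.card_le_univ (properClusters H)
    rwa [Fintype.card_finset] at this
  calc rankHP H ≤ (properClusters H).card * Fintype.card X := h1
    _ ≤ 2 ^ Fintype.card X * Fintype.card X := Nat.mul_le_mul_right _ h2

lemma rank_mono_aux {H' : Finset (Finset X)} (hH' : IsHierarchy H') :
    ∀ k : ℕ, ∀ H : Finset (Finset X), IsHierarchy H → LeHP H H' →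
      2 ^ Fintype.card X * Fintype.card X + 1 - rankHP H ≤ k → rankHP H ≤ rankHP H' := by
  intro k
  induction k with
  | zero =>
    intro H hH hle hk
    have := rankHP_le H
    omega
  | succ k ih =>
    intro H hH hle hk
    rcases eq_or_ne H H' with rfl | hne
    · exact le_refl _
    obtain ⟨K, hK, h1, h2, h3⟩ := exists_step hH hH' hle hne
    have hb := rankHP_le H
    have := ih K hK h2 (by omega)
    omega

lemma rank_mono {H H' : Finset (Finset X)} (hH : IsHierarchy H) (hH' : IsHierarchy H')
    (hle : LeHP H H') : rankHP H ≤ rankHP H' :=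
  rank_mono_aux hH' (2 ^ Fintype.card X * Fintype.card X + 1) H hH hle (Nat.sub_le _ _)

lemma eq_of_rank_le {H H' : Finset (Finset X)} (hH : IsHierarchy H) (hH' : IsHierarchy H')
    (hle : LeHP H H') (h : rankHP H' ≤ rankHP H) : H = H' := by
  by_contra hne
  obtain ⟨K, hK, h1, h2, h3⟩ := exists_step hH hH' hle hne
  have := rank_mono hK hH' h2
  omega

lemma covers_of_step {H K : Finset (Finset X)} (hH : IsHierarchy H) (hK : IsHierarchy K)
    (h1 : LeHP H K) (h3 : rankHP K = rankHP H + 1) : CoversHP H K := by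
  refine ⟨h1, ?_, ?_⟩
  · intro h; rw [h] at h3; omega
  · intro H'' hH'' ha hb
    have r1 := rank_mono hH hH'' ha
    have r2 := rank_mono hH'' hK hb
    rcases Nat.lt_or_ge (rankHP H'') (rankHP K) with h | h
    · left
      exact (eq_of_rank_le hH hH'' ha (by omega)).symm
    · right
      exact eq_of_rank_le hH'' hK hb h

lemma rank_of_covers {H K : Finset (Finset X)} (hH : IsHierarchy H) (hK : IsHierarchy K)
    (hc : CoversHP H K) : rankHP K = rankHP H + 1 := by
  obtain ⟨hle, hne, hmin⟩ := hc
  obtain ⟨K₂, h1, h2, h3, h4⟩ := exists_step hH hK hle hne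
  rcases hmin K₂ h1 h2 h3 with h | h
  · rw [h] at h4; omega
  · rw [← h]; exact h4

lemma path_exists_aux {H' : Finset (Finset X)} (hH' : IsHierarchy H') :
    ∀ k : ℕ, ∀ H : Finset (Finset X), IsHierarchy H → LeHP H H' →
      2 ^ Fintype.card X * Fintype.card X + 1 - rankHP H ≤ k →
      HasPathHP H H' (rankHP H' - rankHP H) := by
  intro k
  induction k with
  | zero =>
    intro H hH hle hk
    exact absurd hk (by have := rankHP_le H; omega)
  | succ k ih =>
    intro H hH hle hk
    rcases eq_or_ne H H' with rfl | hne
    · rw [Nat.sub_self]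
      exact ⟨fun _ => H, rfl, rfl, fun i hi => absurd hi (Nat.not_lt_zero i)⟩
    obtain ⟨K, hK, h1, h2, h3⟩ := exists_step hH hH' hle hne
    have hrK : rankHP K ≤ rankHP H' := rank_mono hK hH' h2
    have hb := rankHP_le H
    obtain ⟨c, hc0, hcn, hstep⟩ := ih K hK h2 (by omega)
    have hcov : CoversHP H K := covers_of_step hH hK h1 h3
    have hL : rankHP H' - rankHP H = (rankHP H' - rankHP K) + 1 := by omega
    rw [hL]
    refine ⟨fun i => if i = 0 then H else c (i - 1), if_pos rfl, ?_, ?_⟩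
    · dsimp only
      rw [if_neg (by omega)]
      simpa using hcn
    · intro i hi
      dsimp only
      rcases Nat.eq_zero_or_pos i with rfl | hpos
      · rw [if_pos rfl, if_neg (by omega)]
        have : c (1 - 1) = K := by simpa using hc0
        rw [this]
        exact ⟨hH, hK, Or.inl hcov⟩
      · rw [if_neg (by omega), if_neg (by omega)]
        have hlt : i - 1 < rankHP H' - rankHP K := by omega
        have h := hstep (i - 1) hlt
        have he1 : i - 1 + 1 = i := by omega
        have he2 : i + 1 - 1 = i := by omega
        rw [he1] at h
        rw [he2]
        exact h

lemma path_lb {H' : Finset (Finset X)} :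
    ∀ m : ℕ, ∀ K : Finset (Finset X), HasPathHP K H' m → rankHP H' - rankHP K ≤ m := by
  intro m
  induction m with
  | zero =>
    rintro K ⟨c, h0, hn, -⟩
    rw [← h0, hn]
    omega
  | succ m ih =>
    rintro K ⟨c, h0, hn, hstep⟩
    have hadj := hstep 0 (Nat.succ_pos m)
    rw [h0, zero_add] at hadj
    have htail : HasPathHP (c 1) H' m :=
      ⟨fun i => c (i + 1), rfl, hn, fun i hi => hstep (i + 1) (by omega)⟩
    have hr := ih (c 1) htail
    rcases hadj.2.2 with hcov | hcov
    · have := rank_of_covers hadj.1 hadj.2.1 hcov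
      omega
    · have := rank_of_covers hadj.2.1 hadj.1 hcov
      omega

end Aux

/-- for comparable trees `T ≤_HP T'`, the Hasse-diagram distance equals the
rank difference `f(T') - f(T)`. -/
theorem distHP_of_leHP (H H' : Finset (Finset X))
    (hH : IsHierarchy H) (hH' : IsHierarchy H') (hle : LeHP H H') :
    DistHP H H' (rankHP H' - rankHP H) := by
  constructor
  · exact path_exists_aux hH' (2 ^ Fintype.card X * Fintype.card X + 1) H hH hle
      (Nat.sub_le _ _)
  · intro m hm
    exact path_lb m H hm
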